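/- Assume K, the set of Kronecker numbers, is an IP*-set and contains an IP-set. Then every positive rational number can be written as a ratio of two Kronecker numbers: ℚ_{>0} = {a/b : a, b ∈ K}. -/

import Mathlib

def KroneckerSet : Set ℕ :=
  {n | 0 < n ∧ Even n ∧
    {pq : ℕ × ℕ | pq.1.Prime ∧ pq.2.Prime ∧ pq.1 - pq.2 = n}.Infinite}

def FS (x : ℕ → ℕ) : Set ℕ :=
  {n | ∃ H : Finset ℕ, H.Nonempty ∧ n = ∑ t ∈ H, x t}

/-- Mathlib's inductively-defined finite sums are finite sums over finsets. -/
lemma hindmanFS_subset_FS (a : Stream' ℕ) : Hindman.FS a ⊆ FS a := by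
  intro s hs
  induction hs with
  | head' a => exact ⟨{0}, ⟨0, Finset.mem_singleton_self 0⟩, by simp [Stream'.head]; rfl⟩
  | tail' a m h ih =>
    obtain ⟨H, hne, hsum⟩ := ih
    refine ⟨H.image (· + 1), hne.image _, ?_⟩
    rw [Finset.sum_image (f := fun t => a t) (by intro x _ y _ h; simp only at h; omega)]
    exact hsum
  | cons' a m h ih =>
    obtain ⟨H, hne, hsum⟩ := ih
    refine ⟨insert 0 (H.image (· + 1)), Finset.insert_nonempty _ _, ?_⟩
    rw [Finset.sum_insert (f := fun t => a t) (by simp)]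
    rw [Finset.sum_image (f := fun t => a t) (by intro x _ y _ h; simp only at h; omega)]
    rw [hsum]; rfl

/-- Conversely, every finite sum over a finset is in Mathlib's inductive FS. -/
lemma sub_one_injOn (H : Finset ℕ) (h : ∀ x ∈ H, x ≠ 0) :
    ∀ x ∈ H, ∀ y ∈ H, x - 1 = y - 1 → x = y := by
  intro x hx y hy hxy
  have := h x hx
  have := h y hy
  omega

lemma sum_mem_hindmanFS : ∀ (N : ℕ) (a : Stream' ℕ) (H : Finset ℕ), H.Nonempty →
    (∀ j ∈ H, j ≤ N) → (∑ t ∈ H, a t) ∈ Hindman.FS a := by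
  intro N
  induction N with
  | zero =>
    intro a H hne hbd
    have hH : H = {0} := by
      apply Finset.eq_singleton_iff_nonempty_unique_mem.mpr
      exact ⟨hne, fun x hx => Nat.le_zero.mp (hbd x hx)⟩
    rw [hH, Finset.sum_singleton (f := fun t => a t)]
    exact Hindman.FS.head a
  | succ N ih =>
    intro a H hne hbd
    by_cases h0 : 0 ∈ H
    · by_cases hH : H = {0}
      · rw [hH, Finset.sum_singleton (f := fun t => a t)]; exact Hindman.FS.head a
      · have hne' : (H.erase 0).Nonempty := by
          rw [Finset.nonempty_iff_ne_empty]
          intro hemp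
          apply hH
          apply Finset.eq_singleton_iff_nonempty_unique_mem.mpr
          refine ⟨hne, fun y hy => ?_⟩
          by_contra hy0
          exact Finset.notMem_empty y (hemp ▸ Finset.mem_erase.mpr ⟨hy0, hy⟩)
        have hnz : ∀ t ∈ H.erase 0, t ≠ 0 := fun t ht => (Finset.mem_erase.mp ht).1
        have key : (∑ t ∈ (H.erase 0).image (· - 1), a.tail t) = ∑ t ∈ H.erase 0, a t := by
          rw [Finset.sum_image (f := fun t => a.tail t) (sub_one_injOn _ hnz)]
          apply Finset.sum_congr rfl
          intro t ht
          have ht1 : 1 ≤ t := Nat.one_le_iff_ne_zero.mpr (hnz t ht)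
          show a ((t - 1) + 1) = a t
          rw [Nat.sub_add_cancel ht1]
        have hmem : (∑ t ∈ (H.erase 0).image (· - 1), a.tail t) ∈ Hindman.FS a.tail := by
          apply ih a.tail _ (hne'.image _)
          intro j hj
          obtain ⟨y, hy, hyj⟩ := Finset.mem_image.mp hj
          have := hbd y (Finset.mem_erase.mp hy).2
          omega
        have hsplit : ∑ t ∈ H, a t = a.head + ∑ t ∈ (H.erase 0).image (· - 1), a.tail t := by
          rw [key, ← Finset.sum_erase_add H a h0]
          show _ = a 0 + _
          ring
        rw [hsplit]
        exact Hindman.FS.cons a _ hmem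
    · have hnz : ∀ t ∈ H, t ≠ 0 := fun t ht h => h0 (h ▸ ht)
      have key : (∑ t ∈ H.image (· - 1), a.tail t) = ∑ t ∈ H, a t := by
        rw [Finset.sum_image (f := fun t => a.tail t) (sub_one_injOn _ hnz)]
        apply Finset.sum_congr rfl
        intro t ht
        have ht1 : 1 ≤ t := Nat.one_le_iff_ne_zero.mpr (hnz t ht)
        show a ((t - 1) + 1) = a t
        rw [Nat.sub_add_cancel ht1]
      rw [← key]
      apply Hindman.FS.tail
      apply ih a.tail _ (hne.image _)
      intro j hj
      obtain ⟨y, hy, hyj⟩ := Finset.mem_image.mp hj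
      have := hbd y hy
      omega

lemma mem_hindmanFS_of_mem_FS {a : Stream' ℕ} {s : ℕ} (hs : s ∈ FS a) : s ∈ Hindman.FS a := by
  obtain ⟨H, hne, hsum⟩ := hs
  rw [hsum]
  exact sum_mem_hindmanFS ((H.max' hne)) a H hne (fun j hj => Finset.le_max' H j hj)

lemma FS_pos {x : ℕ → ℕ} (hx : ∀ n, 0 < x n) {s : ℕ} (hs : s ∈ FS x) : 0 < s := by
  obtain ⟨H, hne, hsum⟩ := hs
  rw [hsum]
  exact Finset.sum_pos (fun i _ => hx i) hne

theorem rat_eq_ratio_kronecker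
    (hKstar : ∀ x : ℕ → ℕ, (∀ n, 0 < x n) → (KroneckerSet ∩ FS x).Nonempty)
    (hKip : ∃ x : ℕ → ℕ, (∀ n, 0 < x n) ∧ FS x ⊆ KroneckerSet) :
    ∀ q : ℚ, 0 < q → ∃ a ∈ KroneckerSet, ∃ b ∈ KroneckerSet, q = (a : ℚ) / (b : ℚ) := by
  intro q hq
  obtain ⟨x, hxpos, hxK⟩ := hKip
  set m : ℕ := q.num.toNat with hm
  set n : ℕ := q.den with hn
  have hmpos : 0 < m := by
    have := Rat.num_pos.mpr hq
    omega
  have hnpos : 0 < n := q.pos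
  set A1 : Set ℕ := {s | m * s ∈ KroneckerSet} with hA1
  set A2 : Set ℕ := {s | n * s ∈ KroneckerSet} with hA2
  set FSx : Set ℕ := Hindman.FS (x : Stream' ℕ) with hFSx
  set cells : Set (Set ℕ) :=
    {FSx ∩ A1 ∩ A2, FSx ∩ A1 ∩ A2ᶜ, FSx ∩ A1ᶜ ∩ A2, FSx ∩ A1ᶜ ∩ A2ᶜ} with hcells
  have cfin : cells.Finite := by
    apply Set.Finite.insert; apply Set.Finite.insert; apply Set.Finite.insert
    exact Set.finite_singleton _
  have ccov : Hindman.FS (x : Stream' ℕ) ⊆ ⋃₀ cells := by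
    intro s hs
    by_cases h1 : s ∈ A1 <;> by_cases h2 : s ∈ A2
    · exact ⟨FSx ∩ A1 ∩ A2, by simp [hcells], ⟨⟨hs, h1⟩, h2⟩⟩
    · exact ⟨FSx ∩ A1 ∩ A2ᶜ, by simp [hcells], ⟨⟨hs, h1⟩, h2⟩⟩
    · exact ⟨FSx ∩ A1ᶜ ∩ A2, by simp [hcells], ⟨⟨hs, h1⟩, h2⟩⟩
    · exact ⟨FSx ∩ A1ᶜ ∩ A2ᶜ, by simp [hcells], ⟨⟨hs, h1⟩, h2⟩⟩
  obtain ⟨p, hp, b, hb⟩ := Hindman.FS_partition_regular (x : Stream' ℕ) cells cfin ccov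
  have hpFSx : p ⊆ FSx := by
    rcases hp with h | h | h | h <;> subst h <;>
      exact fun s hs => hs.1.1
  -- positivity facts
  have hFSxpos : ∀ s ∈ FSx, 0 < s := by
    intro s hs
    exact FS_pos hxpos (hindmanFS_subset_FS _ hs)
  have hbpos : ∀ k, 0 < b k := by
    intro k
    exact hFSxpos _ (hpFSx (hb (Hindman.FS.singleton b k)))
  -- apply IP* to m·b and n·b
  obtain ⟨c1, hc1K, hc1FS⟩ := hKstar (fun k => m * b k)
    (fun k => Nat.mul_pos hmpos (hbpos k))
  obtain ⟨c2, hc2K, hc2FS⟩ := hKstar (fun k => n * b k)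
    (fun k => Nat.mul_pos hnpos (hbpos k))
  obtain ⟨H1, hne1, hsum1⟩ := hc1FS
  obtain ⟨H2, hne2, hsum2⟩ := hc2FS
  set s1 : ℕ := ∑ t ∈ H1, b t with hs1
  set s2 : ℕ := ∑ t ∈ H2, b t with hs2
  have hs1p : s1 ∈ p := hb (mem_hindmanFS_of_mem_FS ⟨H1, hne1, rfl⟩)
  have hs2p : s2 ∈ p := hb (mem_hindmanFS_of_mem_FS ⟨H2, hne2, rfl⟩)
  have hs1A1 : s1 ∈ A1 := by
    show m * s1 ∈ KroneckerSet
    rw [hs1, Finset.mul_sum (f := fun t => b t)]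
    rw [hsum1] at hc1K
    exact hc1K
  have hs2A2 : s2 ∈ A2 := by
    show n * s2 ∈ KroneckerSet
    rw [hs2, Finset.mul_sum (f := fun t => b t)]
    rw [hsum2] at hc2K
    exact hc2K
  -- identify the cell
  have key : ∃ s : ℕ, 0 < s ∧ m * s ∈ KroneckerSet ∧ n * s ∈ KroneckerSet := by
    rcases hp with h | h | h | h
    · subst h
      exact ⟨s1, hFSxpos _ hs1p.1.1, hs1p.1.2, hs1p.2⟩
    · subst h
      exact absurd hs2A2 hs2p.2
    · subst h
      exact absurd hs1A1 hs1p.1.2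
    · subst h
      exact absurd hs1A1 hs1p.1.2
  obtain ⟨s, hspos, hmsK, hnsK⟩ := key
  refine ⟨m * s, hmsK, n * s, hnsK, ?_⟩
  have hscast : (s : ℚ) ≠ 0 := Nat.cast_ne_zero.mpr hspos.ne'
  have hmcast : (m : ℚ) = (q.num : ℚ) := by
    rw [hm]
    norm_cast
    exact Int.toNat_of_nonneg (Rat.num_pos.mpr hq).le
  rw [Nat.cast_mul, Nat.cast_mul, mul_div_mul_right _ _ hscast, hmcast, hn]
  exact (Rat.num_div_den q).symm
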